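/- There is an isomorphism of graded k-algebras ν̂: Z_n^{aff}(Γ) → Z_n^{aff}(Γ)^{op} given on the generators by ν̂(z_t) = z_t, ν̂(e_i) = e_i (for each tuple i ∈ Γ_0^n of vertices), ν̂(a^{i,j}_t) = a^{j,i}_t, and ν̂(s_u) = s_u, for all t ∈ [1,n], u ∈ [1,n−1], and edges {i,j} ∈ Γ_1. -/

import Mathlib

/-!
Statement 14 (Lemma `affzigop`): there is an isomorphism of (graded) `k`-algebras
`ν̂ : Z_n^{aff}(Γ) → Z_n^{aff}(Γ)^{op}` with `ν̂(z_t) = z_t`, `ν̂(e_𝐢) = e_𝐢`,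
`ν̂(a^{i,j}_t) = a^{j,i}_t` and `ν̂(s_u) = s_u`.
-/

noncomputable section

variable (k : Type*) [CommRing k]
variable (V : Type*) [Fintype V] [DecidableEq V] (G : SimpleGraph V) [DecidableRel G.Adj]

/-- Generators of the zigzag algebra `Z(Γ)` of a graph `Γ`: the idempotents `e_i`
(`i` a vertex), the arrows `a^{i,j} : j → i` (`{i,j}` an edge, one arrow for each
orientation), and the length-two cycles `c_i` based at `i`. -/
inductive ZigGen : Type _
  | e : V → ZigGen
  | a : (p : V × V) → G.Adj p.1 p.2 → ZigGen
  | c : V → ZigGen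

open FreeAlgebra in
/-- The defining relations of the zigzag algebra: the `e_i` are orthogonal
idempotents summing to `1`; `a^{i,j}` is a path from `j` to `i`; all paths of
length `≥ 3` vanish; length-two paths which are not cycles vanish; all length-two
cycles at a vertex `i` are equal (to `c_i`). -/
inductive ZigRel : FreeAlgebra k (ZigGen V G) → FreeAlgebra k (ZigGen V G) → Prop
  | ee (i j : V) :
      ZigRel (ι k (.e i) * ι k (.e j)) (if i = j then ι k (.e i) else 0)
  | esum : ZigRel (∑ i : V, ι k (.e i)) 1
  | ea (i : V) (p : V × V) (h : G.Adj p.1 p.2) :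
      ZigRel (ι k (.e i) * ι k (.a p h)) (if i = p.1 then ι k (.a p h) else 0)
  | ae (p : V × V) (h : G.Adj p.1 p.2) (j : V) :
      ZigRel (ι k (.a p h) * ι k (.e j)) (if j = p.2 then ι k (.a p h) else 0)
  | aa (p : V × V) (h : G.Adj p.1 p.2) (q : V × V) (h' : G.Adj q.1 q.2) :
      ZigRel (ι k (.a p h) * ι k (.a q h'))
        (if p.2 = q.1 ∧ p.1 = q.2 then ι k (.c p.1) else 0)
  | ec (i j : V) :
      ZigRel (ι k (.e i) * ι k (.c j)) (if i = j then ι k (.c j) else 0)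
  | ce (j i : V) :
      ZigRel (ι k (.c j) * ι k (.e i)) (if i = j then ι k (.c j) else 0)
  | ca (j : V) (p : V × V) (h : G.Adj p.1 p.2) :
      ZigRel (ι k (.c j) * ι k (.a p h)) 0
  | ac (p : V × V) (h : G.Adj p.1 p.2) (j : V) :
      ZigRel (ι k (.a p h) * ι k (.c j)) 0
  | cc (i j : V) : ZigRel (ι k (.c i) * ι k (.c j)) 0

/-- The zigzag algebra `Z(Γ)` of the graph `Γ`, presented by generators and
relations. -/
abbrev ZigAlg := RingQuot (ZigRel k V G)

/-- The idempotent `e_i ∈ Z(Γ)`. -/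
noncomputable def eZ (i : V) : ZigAlg k V G :=
  RingQuot.mkAlgHom k (ZigRel k V G) (FreeAlgebra.ι k (.e i))

/-- The arrow `a^{i,j} ∈ Z(Γ)` (a path from `j` to `i`), for an edge `{i,j}`. -/
noncomputable def aZ (p : V × V) (h : G.Adj p.1 p.2) : ZigAlg k V G :=
  RingQuot.mkAlgHom k (ZigRel k V G) (FreeAlgebra.ι k (.a p h))

/-- The length-two cycle `c e_i = c_i ∈ Z(Γ)`. -/
noncomputable def cZ (i : V) : ZigAlg k V G :=
  RingQuot.mkAlgHom k (ZigRel k V G) (FreeAlgebra.ι k (.c i))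

/-- Path-length degree of the generators of the zigzag algebra. -/
def zigDeg : ZigGen V G → ℕ
  | .e _ => 0
  | .a _ _ => 1
  | .c _ => 2

/-- The degree-`m` homogeneous component of the zigzag algebra for the path-length
grading: the span of the images of products of generators of total degree `m`. -/
noncomputable def ZigComp (m : ℕ) : Submodule k (ZigAlg k V G) :=
  Submodule.span k {x | ∃ L : List (ZigGen V G),
    (L.map (zigDeg V G)).sum = m ∧
    x = (L.map (fun g => RingQuot.mkAlgHom k (ZigRel k V G) (FreeAlgebra.ι k g))).prod}

/-- The family `{e_i} ∪ {a^{i,j}} ∪ {c e_i}`, which is the standard basis of the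
zigzag algebra. -/
noncomputable def zigFam :
    (V ⊕ {p : V × V // G.Adj p.1 p.2} ⊕ V) → ZigAlg k V G :=
  Sum.elim (fun i => eZ k V G i)
    (Sum.elim (fun p => aZ k V G p.1 p.2) (fun i => cZ k V G i))

end

open scoped TensorProduct


noncomputable section

/-- The distinguished element `Δ(1)` of a graded symmetric algebra. -/
noncomputable def DeltaElem (k A : Type*) [CommRing k] [Ring A] [Algebra k A]
    [Module.Free k A] [Module.Finite k A]
    (φ : A ≃ₗ[k] Module.Dual k A) : A ⊗[k] A :=
  TensorProduct.map φ.symm.toLinearMap φ.symm.toLinearMap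
    ((TensorProduct.dualDistribEquiv k A A).symm
      ((LinearMap.mul' k A).dualMap (φ 1)))

variable (k A : Type*) [CommRing k] [Ring A] [Algebra k A] (n : ℕ)

/-- The `n`-fold tensor power `A^{⊗ n}`. -/
abbrev TPow := PiTensorProduct k (fun _ : Fin n => A)

/-- The place permutation action of `σ ∈ S_n` on `A^{⊗n}`:
`^σ(v_1 ⊗ ⋯ ⊗ v_n) = v_{σ⁻¹ 1} ⊗ ⋯ ⊗ v_{σ⁻¹ n}`. -/
noncomputable def permAct (σ : Equiv.Perm (Fin n)) : TPow k A n ≃ₗ[k] TPow k A n :=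
  PiTensorProduct.reindex k (fun _ : Fin n => A) σ

/-- The map `ι_{t,u} : A ⊗ A → A^{⊗n}` placing the two factors in slots `t` and `u`
(`t ≠ u`) and `1`'s elsewhere. -/
noncomputable def slotEmb (t u : Fin n) (h : t ≠ u) : A ⊗[k] A →ₗ[k] TPow k A n :=
  TensorProduct.lift <| LinearMap.mk₂ k
    (fun a b => PiTensorProduct.tprod k
        (Function.update (Function.update (fun _ : Fin n => (1 : A)) t a) u b))
    (by
      intro a a' b
      try dsimp only
      rw [Function.update_comm h, Function.update_comm h, Function.update_comm h,
        MultilinearMap.map_update_add])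
    (by
      intro c a b
      try dsimp only
      rw [Function.update_comm h, Function.update_comm h,
        MultilinearMap.map_update_smul])
    (by intro a b b'; (try dsimp only); rw [MultilinearMap.map_update_add])
    (by intro c a b; (try dsimp only); rw [MultilinearMap.map_update_smul])

/-- `Δ_{t,u} := ι_{t,u}(Δ(1)) ∈ A^{⊗n}`. -/
noncomputable def DeltaSlot (D : A ⊗[k] A) (t u : Fin n) (h : t ≠ u) : TPow k A n :=
  slotEmb k A n t u h D

/-- Generators of the rank `n` affinization `H_n(A)`. -/
inductive AffGen : Type _
  | z : Fin n → AffGen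
  | t : TPow k A n → AffGen
  | s : Equiv.Perm (Fin n) → AffGen

variable {k A}

open FreeAlgebra in
/-- The defining relations of the rank `n` affinization `H_n(A)` (relative to a
choice of distinguished element `D = Δ(1) ∈ A ⊗ A`): the relations of the free
product `k[z_1,…,z_n] ⋆ A^{⊗n} ⋆ kS_n` together with the commutation relations
(3.4)–(3.6) of Definition 3.3. -/
inductive AffRel (D : A ⊗[k] A) :
    FreeAlgebra k (AffGen k A n) → FreeAlgebra k (AffGen k A n) → Prop
  -- `A^{⊗n}` is a subalgebra
  | t_add (a b : TPow k A n) :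
      AffRel D (ι k (.t (a + b))) (ι k (.t a) + ι k (.t b))
  | t_smul (c : k) (a : TPow k A n) :
      AffRel D (ι k (.t (c • a))) (c • ι k (.t a))
  | t_mul (a b : TPow k A n) :
      AffRel D (ι k (.t (a * b))) (ι k (.t a) * ι k (.t b))
  | t_one : AffRel D (ι k (.t 1)) 1
  -- `k S_n` is a subalgebra
  | s_mul (σ τ : Equiv.Perm (Fin n)) :
      AffRel D (ι k (.s (σ * τ))) (ι k (.s σ) * ι k (.s τ))
  | s_one : AffRel D (ι k (.s 1)) 1
  -- the polynomial generators commute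
  | zz (i j : Fin n) :
      AffRel D (ι k (.z i) * ι k (.z j)) (ι k (.z j) * ι k (.z i))
  -- relation (3.4): `a z_j = z_j a`
  | az (a : TPow k A n) (j : Fin n) :
      AffRel D (ι k (.t a) * ι k (.z j)) (ι k (.z j) * ι k (.t a))
  -- relation (3.5): `s_i a = (^{s_i} a) s_i`
  | sa (i : Fin n) (h : (i : ℕ) + 1 < n) (a : TPow k A n) :
      AffRel D (ι k (.s (Equiv.swap i ⟨i + 1, h⟩)) * ι k (.t a))
        (ι k (.t (permAct k A n (Equiv.swap i ⟨i + 1, h⟩) a)) *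
          ι k (.s (Equiv.swap i ⟨i + 1, h⟩)))
  -- relation (3.6): `s_i z_j - z_{s_i j} s_i = (δ_{i,j} - δ_{i+1,j}) Δ_{i,i+1}`
  | sz (i : Fin n) (h : (i : ℕ) + 1 < n) (j : Fin n) :
      AffRel D (ι k (.s (Equiv.swap i ⟨i + 1, h⟩)) * ι k (.z j))
        (ι k (.z (Equiv.swap i ⟨i + 1, h⟩ j)) * ι k (.s (Equiv.swap i ⟨i + 1, h⟩)) +
          ((if j = i then (1 : k) else 0) - (if j = ⟨i + 1, h⟩ then (1 : k) else 0)) •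
            ι k (.t (DeltaSlot k A n D i ⟨i + 1, h⟩
              (ne_of_lt (Fin.lt_def.mpr (Nat.lt_succ_self _))))))

/-- The rank `n` affinization `H_n(A)` of the symmetric algebra `A`, presented by
generators and relations. -/
abbrev AffAlg (D : A ⊗[k] A) := RingQuot (AffRel (k := k) (A := A) n D)

variable (D : A ⊗[k] A)

/-- The generator `z_i ∈ H_n(A)`. -/
noncomputable def zE (i : Fin n) : AffAlg n D :=
  RingQuot.mkAlgHom k (AffRel n D) (FreeAlgebra.ι k (.z i))

/-- The canonical map `A^{⊗n} → H_n(A)`. -/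
noncomputable def tE : TPow k A n →ₗ[k] AffAlg n D where
  toFun a := RingQuot.mkAlgHom k (AffRel n D) (FreeAlgebra.ι k (.t a))
  map_add' a b := by
    have := RingQuot.mkAlgHom_rel k (AffRel.t_add (D := D) (n := n) a b)
    simpa using this
  map_smul' c a := by
    have := RingQuot.mkAlgHom_rel k (AffRel.t_smul (D := D) (n := n) c a)
    simpa using this

/-- The canonical image of `σ ∈ S_n` in `H_n(A)`. -/
noncomputable def sE (σ : Equiv.Perm (Fin n)) : AffAlg n D :=
  RingQuot.mkAlgHom k (AffRel n D) (FreeAlgebra.ι k (.s σ))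

/-- The canonical map `k S_n → H_n(A)`. -/
noncomputable def gE : MonoidAlgebra k (Equiv.Perm (Fin n)) →ₐ[k] AffAlg n D :=
  MonoidAlgebra.lift k (AffAlg n D) (Equiv.Perm (Fin n))
    { toFun := fun σ => sE n D σ
      map_one' := by
        have := RingQuot.mkAlgHom_rel k (AffRel.s_one (D := D) (n := n))
        simpa [sE] using this
      map_mul' := fun σ τ => by
        have := RingQuot.mkAlgHom_rel k (AffRel.s_mul (D := D) (n := n) σ τ)
        simpa [sE] using this }

/-- The canonical `k`-linear map `k[z_1, …, z_n] → H_n(A)` sending a monomial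
`z^m` to `z_1^{m_1} ⋯ z_n^{m_n}`. -/
noncomputable def zMon : MvPolynomial (Fin n) k →ₗ[k] AffAlg n D :=
  (MvPolynomial.basisMonomials (Fin n) k).constr k
    (fun m => ((List.finRange n).map (fun i => zE n D i ^ m i)).prod)

/-- The underlying `k`-module `V = k[z_1,…,z_n] ⊗ A^{⊗n} ⊗ kS_n`. -/
abbrev AffModV := MvPolynomial (Fin n) k ⊗[k]
  (TPow k A n ⊗[k] MonoidAlgebra k (Equiv.Perm (Fin n)))

/-- The multiplication map `V → H_n(A)`, `f ⊗ a ⊗ w ↦ f a w`. -/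
noncomputable def mulMap : AffModV (k := k) (A := A) n →ₗ[k] AffAlg n D :=
  TensorProduct.lift <| (LinearMap.mul k (AffAlg n D)).compl₁₂ (zMon n D)
    (TensorProduct.lift <| (LinearMap.mul k (AffAlg n D)).compl₁₂ (tE n D)
      (gE n D).toLinearMap)

end

variable (k : Type*) [CommRing k]
  (V : Type*) [Fintype V] [DecidableEq V]
  (G : SimpleGraph V) [DecidableRel G.Adj]

/-- The distinguished element
`Δ(1) = ∑_i (e_i ⊗ c e_i + c e_i ⊗ e_i + ∑_{j ∼ i} a^{j,i} ⊗ a^{i,j})`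
of the zigzag algebra `Z(Γ)`. -/
noncomputable def zigDelta : ZigAlg k V G ⊗[k] ZigAlg k V G :=
  (∑ i : V, (eZ k V G i ⊗ₜ[k] cZ k V G i + cZ k V G i ⊗ₜ[k] eZ k V G i)) +
    ∑ p : {p : V × V // G.Adj p.1 p.2},
      aZ k V G (p.1.2, p.1.1) p.2.symm ⊗ₜ[k] aZ k V G p.1 p.2

/-- The rank `n` affine zigzag algebra `Z_n^{aff}(Γ) = H_n(Z(Γ))`. -/
abbrev AffZig (n : ℕ) := AffAlg (k := k) (A := ZigAlg k V G) n (zigDelta k V G)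

/-- The idempotent `e_𝐢 = e_{i_1} ⊗ ⋯ ⊗ e_{i_n} ∈ Z(Γ)^{⊗n}` for `𝐢 ∈ Γ₀^n`. -/
noncomputable def eTup (n : ℕ) (v : Fin n → V) : TPow k (ZigAlg k V G) n :=
  PiTensorProduct.tprod k (fun r => eZ k V G (v r))

/-- The element `a^{i,j}_t ∈ Z(Γ)^{⊗n}` with `a^{i,j}` in the `t`-th slot and `1`'s
elsewhere. -/
noncomputable def aSlot (n : ℕ) (t : Fin n) (p : V × V) (h : G.Adj p.1 p.2) :
    TPow k (ZigAlg k V G) n :=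
  PiTensorProduct.tprod k
    (Function.update (fun _ : Fin n => (1 : ZigAlg k V G)) t (aZ k V G p h))

/-!
Reversing paths, `e_i ↦ e_i`, `a^{i,j} ↦ a^{j,i}`, `c_i ↦ c_i`, respects the zigzag relations
read backwards, so it is an anti-involution `τ` of `Z(Γ)`; it fixes `Δ(1)` because it permutes
the edge terms `a^{j,i} ⊗ a^{i,j}` among themselves. For any algebra `A` with an anti-involution
`τ` fixing `D`, the assignment `z_t ↦ z_t`, `a ↦ τ^{⊗n}(a)`, `σ ↦ σ⁻¹` respects the relations of
`H_n(A)` read backwards: `τ^{⊗n}` commutes with the place permutations and fixes `Δ_{i,i+1}`, and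
the relation `s_i z_j - z_{s_i j} s_i = ±Δ_{i,i+1}` reversed is the same relation at `s_i(j)`.
Being its own inverse, this anti-homomorphism is an isomorphism onto the opposite algebra.
-/

open MulOpposite

section AntiInvolution

variable {R B : Type*} [CommSemiring R] [Semiring B] [Algebra R B]

def AlgEquiv.ofAntiInvolution (Φ : B →ₐ[R] Bᵐᵒᵖ)
    (hΦ : (AlgHom.opComm Φ).comp Φ = AlgHom.id R B) : B ≃ₐ[R] Bᵐᵒᵖ :=
  AlgEquiv.ofAlgHom Φ (AlgHom.opComm Φ)
    (AlgHom.ext fun x => unop_injective (AlgHom.congr_fun hΦ x.unop)) hΦ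

@[simp] theorem AlgEquiv.ofAntiInvolution_apply (Φ : B →ₐ[R] Bᵐᵒᵖ)
    (hΦ : (AlgHom.opComm Φ).comp Φ = AlgHom.id R B) (x : B) :
    AlgEquiv.ofAntiInvolution Φ hΦ x = Φ x := rfl

end AntiInvolution

namespace PiTensorProduct

variable {R A ι : Type*} [CommSemiring R] [Semiring A] [Algebra R A] {τ : A →ₗ[R] A}

theorem map_const_one (hτ : τ 1 = 1) : map (fun _ : ι => τ) 1 = 1 := by
  rw [one_def, map_tprod]
  exact congrArg (tprod R) (funext fun _ => hτ)

theorem map_const_mul_rev (hτ : ∀ x y, τ (x * y) = τ y * τ x) (x y : ⨂[R] _ : ι, A) :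
    map (fun _ => τ) (x * y) = map (fun _ => τ) y * map (fun _ => τ) x := by
  induction x using PiTensorProduct.induction_on with
  | smul_tprod r v =>
    induction y using PiTensorProduct.induction_on with
    | smul_tprod r' w =>
      simp only [smul_mul_smul_comm, map_smul, tprod_mul_tprod, map_tprod, Pi.mul_apply, hτ,
        mul_comm r r']
      rfl
    | add a b ha hb => simp only [mul_add, add_mul, map_add, ha, hb]
  | add a b ha hb => simp only [mul_add, add_mul, map_add, ha, hb]

theorem map_const_involutive (hτ : Function.Involutive τ) :
    Function.Involutive (map fun _ : ι => τ) := by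
  have hcomp : τ ∘ₗ τ = LinearMap.id := LinearMap.ext hτ
  intro x
  rw [← LinearMap.comp_apply, ← map_comp, hcomp, map_id, LinearMap.id_apply]

end PiTensorProduct

section TensorPower

variable {k A : Type*} [CommRing k] [Ring A] [Algebra k A] {n : ℕ} {τ : A →ₗ[k] A}

theorem permAct_permAct (σ ρ : Equiv.Perm (Fin n)) (x : TPow k A n) :
    permAct k A n σ (permAct k A n ρ x) = permAct k A n (σ * ρ) x :=
  PiTensorProduct.reindex_reindex ρ σ x

theorem permAct_one (x : TPow k A n) : permAct k A n 1 x = x := by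
  rw [permAct, Equiv.Perm.one_def, PiTensorProduct.reindex_refl, LinearEquiv.refl_apply]

theorem map_permAct (σ : Equiv.Perm (Fin n)) (x : TPow k A n) :
    PiTensorProduct.map (fun _ => τ) (permAct k A n σ x)
      = permAct k A n σ (PiTensorProduct.map (fun _ => τ) x) :=
  PiTensorProduct.map_reindex (fun _ => τ) σ x

theorem map_slotEmb (hτ : τ 1 = 1) (t u : Fin n) (h : t ≠ u) (X : A ⊗[k] A) :
    PiTensorProduct.map (fun _ => τ) (slotEmb k A n t u h X)
      = slotEmb k A n t u h (TensorProduct.map τ τ X) := by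
  induction X using TensorProduct.induction_on with
  | zero => simp only [map_zero]
  | tmul x y =>
    simp only [slotEmb, TensorProduct.map_tmul, TensorProduct.lift.tmul, LinearMap.mk₂_apply,
      PiTensorProduct.map_tprod]
    congr 1
    funext i
    rcases eq_or_ne i u with rfl | hu
    · simp
    rcases eq_or_ne i t with rfl | ht
    · simp [hu]
    · simp [hu, ht, hτ]
  | add X Y hX hY => simp only [map_add, hX, hY]

end TensorPower

section Affinization

variable {k A : Type*} [CommRing k] [Ring A] [Algebra k A] {n : ℕ} {D : A ⊗[k] A}

@[simp] theorem mkAlgHom_ι_z (i : Fin n) :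
    RingQuot.mkAlgHom k (AffRel n D) (FreeAlgebra.ι k (.z i)) = zE n D i := rfl

@[simp] theorem mkAlgHom_ι_t (a : TPow k A n) :
    RingQuot.mkAlgHom k (AffRel n D) (FreeAlgebra.ι k (.t a)) = tE n D a := rfl

@[simp] theorem mkAlgHom_ι_s (σ : Equiv.Perm (Fin n)) :
    RingQuot.mkAlgHom k (AffRel n D) (FreeAlgebra.ι k (.s σ)) = sE n D σ := rfl

theorem tE_mul (a b : TPow k A n) : tE n D (a * b) = tE n D a * tE n D b := by
  simpa using RingQuot.mkAlgHom_rel k (AffRel.t_mul (D := D) a b)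

theorem tE_one : tE n D 1 = 1 := by
  simpa using RingQuot.mkAlgHom_rel k (AffRel.t_one (D := D) (n := n))

theorem sE_mul (σ ρ : Equiv.Perm (Fin n)) : sE n D (σ * ρ) = sE n D σ * sE n D ρ := by
  simpa using RingQuot.mkAlgHom_rel k (AffRel.s_mul (D := D) σ ρ)

theorem sE_one : sE n D 1 = 1 := by
  simpa using RingQuot.mkAlgHom_rel k (AffRel.s_one (D := D) (n := n))

theorem zE_mul_comm (i j : Fin n) : zE n D i * zE n D j = zE n D j * zE n D i := by
  simpa using RingQuot.mkAlgHom_rel k (AffRel.zz (D := D) i j)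

theorem tE_mul_zE (a : TPow k A n) (j : Fin n) :
    tE n D a * zE n D j = zE n D j * tE n D a := by
  simpa using RingQuot.mkAlgHom_rel k (AffRel.az (D := D) a j)

theorem sE_swap_mul_tE (i : Fin n) (h : (i : ℕ) + 1 < n) (a : TPow k A n) :
    sE n D (Equiv.swap i ⟨i + 1, h⟩) * tE n D a
      = tE n D (permAct k A n (Equiv.swap i ⟨i + 1, h⟩) a) *
          sE n D (Equiv.swap i ⟨i + 1, h⟩) := by
  simpa using RingQuot.mkAlgHom_rel k (AffRel.sa (D := D) i h a)

theorem sE_swap_mul_zE (i : Fin n) (h : (i : ℕ) + 1 < n) (j : Fin n) :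
    sE n D (Equiv.swap i ⟨i + 1, h⟩) * zE n D j
      = zE n D (Equiv.swap i ⟨i + 1, h⟩ j) * sE n D (Equiv.swap i ⟨i + 1, h⟩) +
          ((if j = i then (1 : k) else 0) - (if j = ⟨i + 1, h⟩ then (1 : k) else 0)) •
            tE n D (DeltaSlot k A n D i ⟨i + 1, h⟩
              (ne_of_lt (Fin.lt_def.mpr (Nat.lt_succ_self _)))) := by
  simpa using RingQuot.mkAlgHom_rel k (AffRel.sz (D := D) i h j)

end Affinization

section AffineFlip

variable {k A : Type*} [CommRing k] [Ring A] [Algebra k A] {n : ℕ} (D : A ⊗[k] A)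
  (τ : A →ₗ[k] A)

noncomputable def affFlipGen : AffGen k A n → (AffAlg n D)ᵐᵒᵖ
  | .z i => op (zE n D i)
  | .t a => op (tE n D (PiTensorProduct.map (fun _ => τ) a))
  | .s σ => op (sE n D σ⁻¹)

variable {D τ}

theorem affFlipGen_respects_rel (hone : τ 1 = 1) (hmul : ∀ x y, τ (x * y) = τ y * τ x)
    (hD : TensorProduct.map τ τ D = D) ⦃x y : FreeAlgebra k (AffGen k A n)⦄
    (hxy : AffRel n D x y) :
    FreeAlgebra.lift k (affFlipGen D τ) x = FreeAlgebra.lift k (affFlipGen D τ) y := by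
  induction hxy with
  | t_add a b => simp [affFlipGen]
  | t_smul c a => simp [affFlipGen]
  | t_mul a b =>
    simp [affFlipGen, PiTensorProduct.map_const_mul_rev hmul, tE_mul]
  | t_one => simp [affFlipGen, PiTensorProduct.map_const_one hone, tE_one]
  | s_mul σ ρ => simp [affFlipGen, sE_mul]
  | s_one => simp [affFlipGen, sE_one]
  | zz i j => simp [affFlipGen, ← op_mul, zE_mul_comm]
  | az a j => simp [affFlipGen, ← op_mul, tE_mul_zE]
  | sa i h a =>
    simp only [map_mul, FreeAlgebra.lift_ι_apply, affFlipGen, ← op_mul, Equiv.swap_inv,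
      sE_swap_mul_tE, map_permAct, permAct_permAct, Equiv.swap_mul_self, permAct_one]
  | sz i h j =>
    -- (3.6) at `s_i(j)`, read backwards: the coefficient of `Δ_{i,i+1}` changes sign
    have hz := sE_swap_mul_zE (D := D) i h (Equiv.swap i ⟨i + 1, h⟩ j)
    simp only [Equiv.swap_apply_self, Equiv.swap_apply_eq_iff, Equiv.swap_apply_left,
      Equiv.swap_apply_right] at hz
    simp only [map_add, map_mul, map_smul, FreeAlgebra.lift_ι_apply, affFlipGen, Equiv.swap_inv,
      DeltaSlot, map_slotEmb hone, hD, ← op_mul, hz, op_add, op_smul]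
    rw [add_assoc, ← add_smul, sub_add_sub_cancel, sub_self, zero_smul, add_zero]

noncomputable def affFlip (hone : τ 1 = 1) (hmul : ∀ x y, τ (x * y) = τ y * τ x)
    (hD : TensorProduct.map τ τ D = D) : AffAlg n D →ₐ[k] (AffAlg n D)ᵐᵒᵖ :=
  RingQuot.liftAlgHom k
    ⟨FreeAlgebra.lift k (affFlipGen D τ), affFlipGen_respects_rel hone hmul hD⟩

variable (hone : τ 1 = 1) (hmul : ∀ x y, τ (x * y) = τ y * τ x)
  (hD : TensorProduct.map τ τ D = D)

theorem affFlip_mkAlgHom_ι (g : AffGen k A n) :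
    affFlip hone hmul hD (RingQuot.mkAlgHom k (AffRel n D) (FreeAlgebra.ι k g))
      = affFlipGen D τ g := by
  rw [affFlip, RingQuot.liftAlgHom_mkAlgHom_apply, FreeAlgebra.lift_ι_apply]

@[simp] theorem affFlip_zE (i : Fin n) : affFlip hone hmul hD (zE n D i) = op (zE n D i) :=
  affFlip_mkAlgHom_ι hone hmul hD (.z i)

@[simp] theorem affFlip_tE (a : TPow k A n) :
    affFlip hone hmul hD (tE n D a) = op (tE n D (PiTensorProduct.map (fun _ => τ) a)) :=
  affFlip_mkAlgHom_ι hone hmul hD (.t a)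

@[simp] theorem affFlip_sE (σ : Equiv.Perm (Fin n)) :
    affFlip hone hmul hD (sE n D σ) = op (sE n D σ⁻¹) :=
  affFlip_mkAlgHom_ι hone hmul hD (.s σ)

theorem opComm_affFlip_comp_affFlip (hτ : Function.Involutive τ) :
    (AlgHom.opComm (affFlip hone hmul hD)).comp (affFlip hone hmul hD)
      = AlgHom.id k (AffAlg n D) := by
  refine RingQuot.ringQuot_ext' (S := k) _ _ (FreeAlgebra.hom_ext (funext fun g => ?_))
  cases g <;> simp [PiTensorProduct.map_const_involutive hτ _]

end AffineFlip

section Zigzag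

variable {k : Type*} [CommRing k] {V : Type*} [Fintype V] [DecidableEq V] {G : SimpleGraph V}

@[simp] theorem mkAlgHom_ι_e (i : V) :
    RingQuot.mkAlgHom k (ZigRel k V G) (FreeAlgebra.ι k (.e i)) = eZ k V G i := rfl

@[simp] theorem mkAlgHom_ι_a (p : V × V) (h : G.Adj p.1 p.2) :
    RingQuot.mkAlgHom k (ZigRel k V G) (FreeAlgebra.ι k (.a p h)) = aZ k V G p h := rfl

@[simp] theorem mkAlgHom_ι_c (i : V) :
    RingQuot.mkAlgHom k (ZigRel k V G) (FreeAlgebra.ι k (.c i)) = cZ k V G i := rfl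

theorem eZ_mul_eZ (i j : V) : eZ k V G i * eZ k V G j = if i = j then eZ k V G i else 0 := by
  simpa [apply_ite] using RingQuot.mkAlgHom_rel k (ZigRel.ee (k := k) (G := G) i j)

theorem sum_eZ : ∑ i, eZ k V G i = 1 := by
  simpa using RingQuot.mkAlgHom_rel k (ZigRel.esum (k := k) (G := G))

theorem eZ_mul_aZ (i : V) (p : V × V) (h : G.Adj p.1 p.2) :
    eZ k V G i * aZ k V G p h = if i = p.1 then aZ k V G p h else 0 := by
  simpa [apply_ite] using RingQuot.mkAlgHom_rel k (ZigRel.ea (k := k) i p h)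

theorem aZ_mul_eZ (p : V × V) (h : G.Adj p.1 p.2) (j : V) :
    aZ k V G p h * eZ k V G j = if j = p.2 then aZ k V G p h else 0 := by
  simpa [apply_ite] using RingQuot.mkAlgHom_rel k (ZigRel.ae (k := k) p h j)

theorem aZ_mul_aZ (p : V × V) (h : G.Adj p.1 p.2) (q : V × V) (h' : G.Adj q.1 q.2) :
    aZ k V G p h * aZ k V G q h' = if p.2 = q.1 ∧ p.1 = q.2 then cZ k V G p.1 else 0 := by
  simpa [apply_ite] using RingQuot.mkAlgHom_rel k (ZigRel.aa (k := k) p h q h')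

theorem eZ_mul_cZ (i j : V) : eZ k V G i * cZ k V G j = if i = j then cZ k V G j else 0 := by
  simpa [apply_ite] using RingQuot.mkAlgHom_rel k (ZigRel.ec (k := k) (G := G) i j)

theorem cZ_mul_eZ (j i : V) : cZ k V G j * eZ k V G i = if i = j then cZ k V G j else 0 := by
  simpa [apply_ite] using RingQuot.mkAlgHom_rel k (ZigRel.ce (k := k) (G := G) j i)

theorem cZ_mul_aZ (j : V) (p : V × V) (h : G.Adj p.1 p.2) : cZ k V G j * aZ k V G p h = 0 := by
  simpa using RingQuot.mkAlgHom_rel k (ZigRel.ca (k := k) j p h)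

theorem aZ_mul_cZ (p : V × V) (h : G.Adj p.1 p.2) (j : V) : aZ k V G p h * cZ k V G j = 0 := by
  simpa using RingQuot.mkAlgHom_rel k (ZigRel.ac (k := k) p h j)

theorem cZ_mul_cZ (i j : V) : cZ k V G i * cZ k V G j = 0 := by
  simpa using RingQuot.mkAlgHom_rel k (ZigRel.cc (k := k) (G := G) i j)

variable (k) in
noncomputable def zigFlipGen : ZigGen V G → (ZigAlg k V G)ᵐᵒᵖ
  | .e i => op (eZ k V G i)
  | .a p h => op (aZ k V G (p.2, p.1) h.symm)
  | .c i => op (cZ k V G i)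

theorem zigFlipGen_respects_rel ⦃x y : FreeAlgebra k (ZigGen V G)⦄ (hxy : ZigRel k V G x y) :
    FreeAlgebra.lift k (zigFlipGen k) x = FreeAlgebra.lift k (zigFlipGen k) y := by
  induction hxy <;>
    simp only [map_mul, map_sum, map_one, map_zero, FreeAlgebra.lift_ι_apply, zigFlipGen,
      apply_ite, ← op_mul, op_zero, op_one, ← Finset.op_sum, eZ_mul_eZ, sum_eZ, eZ_mul_aZ,
      aZ_mul_eZ, aZ_mul_aZ, eZ_mul_cZ, cZ_mul_eZ, cZ_mul_aZ, aZ_mul_cZ, cZ_mul_cZ] <;>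
    (try split_ifs) <;> grind

variable (k G) in
noncomputable def zigFlip : ZigAlg k V G →ₐ[k] (ZigAlg k V G)ᵐᵒᵖ :=
  RingQuot.liftAlgHom k ⟨FreeAlgebra.lift k (zigFlipGen k), zigFlipGen_respects_rel⟩

theorem zigFlip_mkAlgHom_ι (g : ZigGen V G) :
    zigFlip k G (RingQuot.mkAlgHom k (ZigRel k V G) (FreeAlgebra.ι k g)) = zigFlipGen k g := by
  rw [zigFlip, RingQuot.liftAlgHom_mkAlgHom_apply, FreeAlgebra.lift_ι_apply]

@[simp] theorem zigFlip_eZ (i : V) : zigFlip k G (eZ k V G i) = op (eZ k V G i) :=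
  zigFlip_mkAlgHom_ι (.e i)

@[simp] theorem zigFlip_aZ (p : V × V) (h : G.Adj p.1 p.2) :
    zigFlip k G (aZ k V G p h) = op (aZ k V G (p.2, p.1) h.symm) :=
  zigFlip_mkAlgHom_ι (.a p h)

@[simp] theorem zigFlip_cZ (i : V) : zigFlip k G (cZ k V G i) = op (cZ k V G i) :=
  zigFlip_mkAlgHom_ι (.c i)

variable (k G) in
noncomputable def zigRev : ZigAlg k V G →ₗ[k] ZigAlg k V G :=
  (opLinearEquiv k).symm.toLinearMap ∘ₗ (zigFlip k G).toLinearMap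

@[simp] theorem zigRev_eZ (i : V) : zigRev k G (eZ k V G i) = eZ k V G i :=
  congrArg unop (zigFlip_eZ i)

@[simp] theorem zigRev_aZ (p : V × V) (h : G.Adj p.1 p.2) :
    zigRev k G (aZ k V G p h) = aZ k V G (p.2, p.1) h.symm :=
  congrArg unop (zigFlip_aZ p h)

@[simp] theorem zigRev_cZ (i : V) : zigRev k G (cZ k V G i) = cZ k V G i :=
  congrArg unop (zigFlip_cZ i)

theorem zigRev_one : zigRev k G 1 = 1 := congrArg unop (map_one (zigFlip k G))

theorem zigRev_mul (x y : ZigAlg k V G) : zigRev k G (x * y) = zigRev k G y * zigRev k G x :=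
  congrArg unop (map_mul (zigFlip k G) x y)

theorem zigRev_involutive : Function.Involutive (zigRev k G) := by
  have h : (AlgHom.opComm (zigFlip k G)).comp (zigFlip k G) = AlgHom.id k (ZigAlg k V G) := by
    refine RingQuot.ringQuot_ext' (S := k) _ _ (FreeAlgebra.hom_ext (funext fun g => ?_))
    cases g <;> simp
  exact AlgHom.congr_fun h

end Zigzag

section ZigzagAffine

variable {k : Type*} [CommRing k] {V : Type*} [Fintype V] [DecidableEq V] {G : SimpleGraph V}

theorem map_zigRev_zigDelta [DecidableRel G.Adj] :
    TensorProduct.map (zigRev k G) (zigRev k G) (zigDelta k V G) = zigDelta k V G := by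
  simp only [zigDelta, map_add, map_sum, TensorProduct.map_tmul, zigRev_eZ, zigRev_cZ, zigRev_aZ]
  congr 1
  exact Fintype.sum_equiv ((Equiv.prodComm V V).subtypeEquiv fun p => G.adj_comm p.1 p.2) _ _
    fun p => rfl

variable {n : ℕ}

theorem map_zigRev_eTup (v : Fin n → V) :
    PiTensorProduct.map (fun _ => zigRev k G) (eTup k V G n v) = eTup k V G n v := by
  simp only [eTup, PiTensorProduct.map_tprod, zigRev_eZ]

theorem map_zigRev_aSlot (t : Fin n) (p : V × V) (h : G.Adj p.1 p.2) :
    PiTensorProduct.map (fun _ => zigRev k G) (aSlot k V G n t p h)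
      = aSlot k V G n t (p.2, p.1) h.symm := by
  simp only [aSlot, PiTensorProduct.map_tprod]
  congr 1
  funext r
  rcases eq_or_ne r t with rfl | hr
  · simp
  · simp [hr, zigRev_one]

end ZigzagAffine

open MulOpposite in
theorem stmt14_general
    (k : Type*) [CommRing k]
    (V : Type*) [Fintype V] [DecidableEq V]
    (G : SimpleGraph V) [DecidableRel G.Adj]
    (n : ℕ) :
    letI D := zigDelta k V G
    ∃ F : AffZig k V G n ≃ₐ[k] (AffZig k V G n)ᵐᵒᵖ,
      -- `ν̂(z_t) = z_t`
      (∀ t : Fin n, F (zE n D t) = op (zE n D t)) ∧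
      -- `ν̂(e_𝐢) = e_𝐢` for all tuples `𝐢 ∈ Γ₀^n`
      (∀ v : Fin n → V, F (tE n D (eTup k V G n v)) = op (tE n D (eTup k V G n v))) ∧
      -- `ν̂(a^{i,j}_t) = a^{j,i}_t`
      (∀ (t : Fin n) (p : V × V) (h : G.Adj p.1 p.2),
        F (tE n D (aSlot k V G n t p h))
          = op (tE n D (aSlot k V G n t (p.2, p.1) h.symm))) ∧
      -- `ν̂(s_u) = s_u`
      (∀ (u : Fin n) (h : (u : ℕ) + 1 < n),
        F (sE n D (Equiv.swap u ⟨(u : ℕ) + 1, h⟩))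
          = op (sE n D (Equiv.swap u ⟨(u : ℕ) + 1, h⟩))) := by
  refine ⟨AlgEquiv.ofAntiInvolution (affFlip zigRev_one zigRev_mul map_zigRev_zigDelta)
    (opComm_affFlip_comp_affFlip _ _ _ zigRev_involutive), ?_, ?_, ?_, ?_⟩
  · intro t
    simp
  · intro v
    simp [map_zigRev_eTup]
  · intro t p h
    simp [map_zigRev_aSlot]
  · intro u h
    simp

open MulOpposite in
theorem stmt14
    (k : Type*) [CommRing k] [IsNoetherianRing k]
    (V : Type*) [Fintype V] [DecidableEq V]
    (G : SimpleGraph V) [DecidableRel G.Adj]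
    (hconn : G.Connected) (n : ℕ) :
    letI D := zigDelta k V G
    ∃ F : AffZig k V G n ≃ₐ[k] (AffZig k V G n)ᵐᵒᵖ,
      -- `ν̂(z_t) = z_t`
      (∀ t : Fin n, F (zE n D t) = op (zE n D t)) ∧
      -- `ν̂(e_𝐢) = e_𝐢` for all tuples `𝐢 ∈ Γ₀^n`
      (∀ v : Fin n → V, F (tE n D (eTup k V G n v)) = op (tE n D (eTup k V G n v))) ∧
      -- `ν̂(a^{i,j}_t) = a^{j,i}_t`
      (∀ (t : Fin n) (p : V × V) (h : G.Adj p.1 p.2),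
        F (tE n D (aSlot k V G n t p h))
          = op (tE n D (aSlot k V G n t (p.2, p.1) h.symm))) ∧
      -- `ν̂(s_u) = s_u`
      (∀ (u : Fin n) (h : (u : ℕ) + 1 < n),
        F (sE n D (Equiv.swap u ⟨(u : ℕ) + 1, h⟩))
          = op (sE n D (Equiv.swap u ⟨(u : ℕ) + 1, h⟩))) :=
  stmt14_general k V G n
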